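/- arXiv:1904.10352 — 11 statements merged into one kernel-verified Lean document; each statement's English description precedes it below -/
import Mathlib

section
/- For every nonnegative integer n, the number of pairs (a,a') with a < a', a + a' = n, and both a, a' in the Thue–Morse set A_0 equals the number of pairs (b,b') with b < b', b + b' = n, and both b, b' in the complement of A_0 in the nonnegative integers. -/
/-- Thue–Morse set: nonnegative integers with an even number of binary ones. -/
def A0 : Set ℕ := {n : ℕ | Even ((Nat.digits 2 n).count 1)}

/-- Number of representations n = a + a', a < a', a, a' ∈ A. -/
noncomputable def R2 (A : Set ℕ) (n : ℕ) : ℕ :=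
  {p : ℕ × ℕ | p.1 < p.2 ∧ p.1 + p.2 = n ∧ p.1 ∈ A ∧ p.2 ∈ A}.ncard

/-- Number of representations n = a + a', a ≤ a', a, a' ∈ A. -/
noncomputable def R3 (A : Set ℕ) (n : ℕ) : ℕ :=
  {p : ℕ × ℕ | p.1 ≤ p.2 ∧ p.1 + p.2 = n ∧ p.1 ∈ A ∧ p.2 ∈ A}.ncard

/-- Number of ordered pairs (a,b), a ∈ A, b ∈ B, a + b = n. -/
noncomputable def RAB (A B : Set ℕ) (n : ℕ) : ℕ :=
  {p : ℕ × ℕ | p.1 + p.2 = n ∧ p.1 ∈ A ∧ p.2 ∈ B}.ncard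

open Finset

/-- Thue–Morse predicate: even number of binary ones. -/
def tm (a : ℕ) : Prop := Even ((Nat.digits 2 a).count 1)

instance : DecidablePred tm := fun a => by unfold tm; infer_instance

/-- sign -/
def eps (a : ℕ) : ℤ := (-1) ^ ((Nat.digits 2 a).count 1)

lemma eps_eq_ite (a : ℕ) : eps a = if tm a then 1 else -1 := by
  unfold eps tm
  by_cases h : Even ((Nat.digits 2 a).count 1)
  · simp [h, Even.neg_one_pow]
  · simp [h, Odd.neg_one_pow (Nat.not_even_iff_odd.mp h)]

lemma eps_two_mul (k : ℕ) : eps (2 * k) = eps k := by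
  rcases Nat.eq_zero_or_pos k with h | h
  · simp [h]
  · unfold eps
    rw [Nat.digits_def' (by norm_num : 1 < 2) (by omega)]
    have h1 : 2 * k % 2 = 0 := by omega
    have h2 : 2 * k / 2 = k := by omega
    rw [h1, h2, List.count_cons]
    norm_num

lemma eps_two_mul_add_one (k : ℕ) : eps (2 * k + 1) = - eps k := by
  unfold eps
  rw [Nat.digits_def' (by norm_num : 1 < 2) (by omega)]
  have h1 : (2 * k + 1) % 2 = 1 := by omega
  have h2 : (2 * k + 1) / 2 = k := by omega
  rw [h1, h2, List.count_cons]
  simp [pow_succ]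

lemma sum_eps_even (m : ℕ) : ∑ a ∈ range (2 * m), eps a = 0 := by
  induction m with
  | zero => simp
  | succ m ih =>
    have h : 2 * (m + 1) = (2 * m + 1) + 1 := by ring
    rw [h, sum_range_succ, sum_range_succ, ih, eps_two_mul_add_one, eps_two_mul]
    ring

lemma sum_range_eps (n : ℕ) :
    ∑ a ∈ range (n + 1), eps a = if n % 2 = 0 then eps (n / 2) else 0 := by
  rcases Nat.even_or_odd n with ⟨m, hm⟩ | ⟨m, hm⟩
  · have h : n + 1 = 2 * m + 1 := by omega
    rw [h, sum_range_succ, sum_eps_even, eps_two_mul]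
    have : n % 2 = 0 := by omega
    have h2 : n / 2 = m := by omega
    simp [this, h2]
  · have h : n + 1 = 2 * (m + 1) := by omega
    rw [h, sum_eps_even]
    have : n % 2 ≠ 0 := by omega
    simp [this]

def F1 (n : ℕ) : Finset ℕ := (range n).filter (fun a => 2 * a < n ∧ tm a ∧ tm (n - a))
def F2 (n : ℕ) : Finset ℕ := (range n).filter (fun a => 2 * a < n ∧ ¬tm a ∧ ¬tm (n - a))

lemma sum_glo (n : ℕ) :
    ∑ a ∈ (range n).filter (fun a => 2 * a < n), (eps a + eps (n - a)) = 0 := by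
  classical
  have hsplit : ∑ a ∈ range (n + 1), eps a
      = (∑ a ∈ (range (n+1)).filter (fun a => 2 * a = n), eps a)
        + ∑ a ∈ (range (n+1)).filter (fun a => ¬(2 * a = n)), eps a :=
    (Finset.sum_filter_add_sum_filter_not _ _ _).symm
  have hdiag : (∑ a ∈ (range (n+1)).filter (fun a => 2 * a = n), eps a)
      = if n % 2 = 0 then eps (n / 2) else 0 := by
    rcases Nat.even_or_odd n with ⟨m, hm⟩ | ⟨m, hm⟩
    · have : (range (n+1)).filter (fun a => 2 * a = n) = {m} := by
        ext a; simp only [mem_filter, mem_range, mem_singleton]; omega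
      rw [this]
      have h2 : n / 2 = m := by omega
      have h0 : n % 2 = 0 := by omega
      simp [h0, h2]
    · have : (range (n+1)).filter (fun a => 2 * a = n) = ∅ := by
        ext a; simp only [mem_filter, mem_range, notMem_empty, iff_false]; omega
      have h0 : ¬ (n % 2 = 0) := by omega
      simp [this, h0]
  have hG : ∑ a ∈ (range (n+1)).filter (fun a => ¬(2 * a = n)), eps a = 0 := by
    have := hsplit
    rw [sum_range_eps, hdiag] at this
    omega
  -- split G into low and high parts
  have hGsplit : ∑ a ∈ (range (n+1)).filter (fun a => ¬(2 * a = n)), eps a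
      = (∑ a ∈ ((range (n+1)).filter (fun a => ¬(2 * a = n))).filter (fun a => 2 * a < n), eps a)
        + ∑ a ∈ ((range (n+1)).filter (fun a => ¬(2 * a = n))).filter (fun a => ¬(2 * a < n)), eps a :=
    (Finset.sum_filter_add_sum_filter_not _ _ _).symm
  have hlo : ((range (n+1)).filter (fun a => ¬(2 * a = n))).filter (fun a => 2 * a < n)
      = (range n).filter (fun a => 2 * a < n) := by
    ext a; simp only [mem_filter, mem_range]; omega
  have hhi_sum : ∑ a ∈ ((range (n+1)).filter (fun a => ¬(2 * a = n))).filter (fun a => ¬(2 * a < n)), eps a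
      = ∑ a ∈ (range n).filter (fun a => 2 * a < n), eps (n - a) := by
    apply Finset.sum_nbij' (i := fun a => n - a) (j := fun a => n - a)
    · intro a ha; simp only [mem_filter, mem_range] at ha ⊢; omega
    · intro a ha; simp only [mem_filter, mem_range] at ha ⊢; omega
    · intro a ha; simp only [mem_filter, mem_range] at ha; omega
    · intro a ha; simp only [mem_filter, mem_range] at ha; omega
    · intro a ha
      simp only [mem_filter, mem_range] at ha
      congr 1; omega
  rw [hGsplit, hlo, hhi_sum, ← Finset.sum_add_distrib] at hG
  exact hG

lemma card_F1_eq_card_F2 (n : ℕ) : (F1 n).card = (F2 n).card := by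
  classical
  have key : ∑ a ∈ (range n).filter (fun a => 2 * a < n), (eps a + eps (n - a))
      = 2 * ((F1 n).card : ℤ) - 2 * ((F2 n).card : ℤ) := by
    have hpt : ∀ a ∈ (range n).filter (fun a => 2 * a < n),
        eps a + eps (n - a)
          = (if tm a ∧ tm (n - a) then (2 : ℤ) else 0)
            - (if ¬tm a ∧ ¬tm (n - a) then (2 : ℤ) else 0) := by
      intro a _
      rw [eps_eq_ite, eps_eq_ite]
      by_cases h1 : tm a <;> by_cases h2 : tm (n - a) <;> simp [h1, h2]
    rw [Finset.sum_congr rfl hpt, Finset.sum_sub_distrib]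
    rw [← Finset.sum_filter, ← Finset.sum_filter, Finset.sum_const, Finset.sum_const]
    rw [Finset.filter_filter, Finset.filter_filter]
    have e1 : (range n).filter (fun a => 2 * a < n ∧ (tm a ∧ tm (n - a))) = F1 n := by
      simp [F1, and_assoc]
    have e2 : (range n).filter (fun a => 2 * a < n ∧ (¬tm a ∧ ¬tm (n - a))) = F2 n := by
      simp [F2, and_assoc]
    rw [e1, e2]
    push_cast [nsmul_eq_mul]
    ring
  rw [sum_glo] at key
  omega

lemma R2_eq_card (A : Set ℕ) (P : ℕ → Prop) [DecidablePred P] (hA : ∀ a, a ∈ A ↔ P a) (n : ℕ) :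
    R2 A n = ((range n).filter (fun a => 2 * a < n ∧ P a ∧ P (n - a))).card := by
  classical
  have hset : {p : ℕ × ℕ | p.1 < p.2 ∧ p.1 + p.2 = n ∧ p.1 ∈ A ∧ p.2 ∈ A}
      = ↑(((range n).filter (fun a => 2 * a < n ∧ P a ∧ P (n - a))).image
          (fun a => (a, n - a))) := by
    ext ⟨a, b⟩
    simp only [Set.mem_setOf_eq, coe_image, Set.mem_image, mem_coe, mem_filter, mem_range,
      hA, Prod.mk.injEq]
    constructor
    · rintro ⟨h1, h2, h3, h4⟩
      refine ⟨a, ⟨by omega, by omega, h3, ?_⟩, rfl, by omega⟩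
      rwa [show n - a = b by omega]
    · rintro ⟨x, ⟨hx1, hx2, hx3, hx4⟩, rfl, rfl⟩
      exact ⟨by omega, by omega, hx3, hx4⟩
  rw [R2, hset, Set.ncard_coe_finset, card_image_of_injective]
  intro x y h
  exact (Prod.mk.injEq _ _ _ _).mp h |>.1

theorem stmt_0 (n : ℕ) : R2 A0 n = R2 A0ᶜ n := by
  classical
  rw [R2_eq_card A0 tm (fun a => Iff.rfl) n,
      R2_eq_card A0ᶜ (fun a => ¬ tm a) (fun a => Iff.rfl) n]
  exact card_F1_eq_card_F2 n
end

section
/- For every nonnegative integer l, there is no representation of 2^{2l+1} - 1 as a sum a + a' with a < a' and both a, a' in the Thue–Morse set A_0; that is, R_2(A_0, 2^{2l+1} - 1) = 0. -/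
lemma Nat.count_one_digits_two (n : ℕ) :
    (Nat.digits 2 n).count 1 = n % 2 + (Nat.digits 2 (n / 2)).count 1 := by
  rcases Nat.eq_zero_or_pos n with rfl | hn
  · simp
  · rw [Nat.digits_def' (by norm_num) hn, List.count_cons]
    rcases Nat.mod_two_eq_zero_or_one n with h | h <;> simp [h, add_comm]

lemma Nat.count_one_digits_two_add_of_add_eq_two_pow_sub_one {m a b : ℕ}
    (h : a + b = 2 ^ m - 1) :
    (Nat.digits 2 a).count 1 + (Nat.digits 2 b).count 1 = m := by
  induction m generalizing a b with
  | zero => simp_all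
  | succ m ih =>
    have hpow : 2 ^ (m + 1) = 2 * 2 ^ m := by ring
    have hpos : 0 < 2 ^ m := by positivity
    have hlow : a % 2 + b % 2 = 1 := by omega
    have hhigh : a / 2 + b / 2 = 2 ^ m - 1 := by omega
    rw [Nat.count_one_digits_two a, Nat.count_one_digits_two b]
    have := ih hhigh
    omega

lemma notMem_A0_of_add_eq_two_pow_sub_one {m a b : ℕ} (hm : Odd m) (h : a + b = 2 ^ m - 1)
    (ha : a ∈ A0) : b ∉ A0 := by
  intro hb
  have hsum := Nat.count_one_digits_two_add_of_add_eq_two_pow_sub_one h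
  exact Nat.not_even_iff_odd.mpr hm (hsum ▸ ha.add hb)

theorem stmt_1 (l : ℕ) : R2 A0 (2 ^ (2 * l + 1) - 1) = 0 := by
  rw [R2]
  convert Set.ncard_empty (ℕ × ℕ)
  refine Set.eq_empty_iff_forall_notMem.mpr ?_
  rintro ⟨a, b⟩ ⟨-, hsum, ha, hb⟩
  exact notMem_A0_of_add_eq_two_pow_sub_one (odd_two_mul_add_one l) hsum ha hb
end

section
/- Let N be a positive integer and A ⊆ ℕ. If R_2(A,n) = R_2(ℕ\A, n) for all n ≥ 2N−1, then |A ∩ [0, 2N−1]| = N, and for all m ≥ N: 2m ∈ A if and only if m ∈ A, and 2m+1 ∈ A if and only if m ∉ A. -/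
private def qsum (c : ℕ → ℕ) (n : ℕ) : ℕ :=
  ∑ a ∈ Finset.range (n+1), if 2*a < n then c a * c (n-a) else 0

private def gsum (c : ℕ → ℕ) (n : ℕ) : ℕ :=
  ∑ a ∈ Finset.range (n+1), c a * c (n-a)

private def Ssum (c : ℕ → ℕ) (n : ℕ) : ℕ := ∑ a ∈ Finset.range (n+1), c a

private lemma reflect (f : ℕ → ℕ) (n : ℕ) :
    ∑ a ∈ Finset.range (n+1), f (n - a) = ∑ a ∈ Finset.range (n+1), f a := by
  have := Finset.sum_range_reflect f (n+1)
  simpa using this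

private lemma high_eq (c : ℕ → ℕ) (n : ℕ) :
    ∑ a ∈ Finset.range (n+1), (if n < 2*a then c a * c (n-a) else 0) = qsum c n := by
  rw [← reflect (fun a => if n < 2*a then c a * c (n-a) else 0) n, qsum]
  refine Finset.sum_congr rfl fun a ha => ?_
  rw [Finset.mem_range] at ha
  by_cases h2 : 2*a < n
  · have h1 : n < 2*(n-a) := by omega
    have h3 : n - (n-a) = a := by omega
    rw [if_pos h1, if_pos h2, h3, mul_comm]
  · have h1 : ¬ n < 2*(n-a) := by omega
    simp [h1, h2]

private lemma gsum_split (c : ℕ → ℕ) (n : ℕ) :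
    gsum c n = 2 * qsum c n + ∑ a ∈ Finset.range (n+1), (if 2*a = n then c a * c (n-a) else 0) := by
  have : gsum c n = qsum c n
      + ∑ a ∈ Finset.range (n+1), (if 2*a = n then c a * c (n-a) else 0)
      + ∑ a ∈ Finset.range (n+1), (if n < 2*a then c a * c (n-a) else 0) := by
    rw [gsum, qsum, ← Finset.sum_add_distrib, ← Finset.sum_add_distrib]
    refine Finset.sum_congr rfl fun a _ => ?_
    rcases lt_trichotomy (2*a) n with h | h | h
    · simp [h, show ¬(2*a = n) by omega, show ¬(n < 2*a) by omega]
    · simp [h, show ¬(2*a < n) by omega, show ¬(n < 2*a) by omega]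
    · simp [h, show ¬(2*a < n) by omega, show ¬(2*a = n) by omega]
  rw [this, high_eq]; ring

private lemma gsum_odd (c : ℕ → ℕ) (m : ℕ) : gsum c (2*m+1) = 2 * qsum c (2*m+1) := by
  rw [gsum_split]
  have : ∑ a ∈ Finset.range (2*m+1+1), (if 2*a = 2*m+1 then c a * c (2*m+1-a) else 0) = 0 := by
    refine Finset.sum_eq_zero fun a _ => by simp; omega
  omega

private lemma gsum_even (c : ℕ → ℕ) (hc : ∀ a, c a ≤ 1) (m : ℕ) :
    gsum c (2*m) = 2 * qsum c (2*m) + c m := by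
  rw [gsum_split]
  have : ∑ a ∈ Finset.range (2*m+1), (if 2*a = 2*m then c a * c (2*m-a) else 0) = c m := by
    rw [Finset.sum_eq_single m]
    · have h1 : 2*m - m = m := by omega
      have h2 : c m = 0 ∨ c m = 1 := by have := hc m; omega
      rcases h2 with h2 | h2 <;> simp [h1, h2]
    · intro b _ hb
      have : ¬ 2*b = 2*m := by omega
      simp [this]
    · intro hm; exact absurd (Finset.mem_range.mpr (by omega)) hm
  omega

private lemma key (c c' : ℕ → ℕ) (hcc : ∀ a, c a + c' a = 1) (n : ℕ) :
    gsum c n + (n+1) = gsum c' n + 2 * Ssum c n := by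
  have h1 : ∀ a ∈ Finset.range (n+1),
      c a * c (n-a) + 1 = c' a * c' (n-a) + (c a + c (n-a)) := by
    intro a _
    have hx := hcc a
    have hy := hcc (n-a)
    have hx1 : c a = 0 ∨ c a = 1 := by omega
    have hy1 : c (n-a) = 0 ∨ c (n-a) = 1 := by omega
    have hx2 : c' a = 1 - c a := by omega
    have hy2 : c' (n-a) = 1 - c (n-a) := by omega
    rcases hx1 with hx1 | hx1 <;> rcases hy1 with hy1 | hy1 <;>
      simp [hx1, hy1, hx2, hy2]
  have h2 : gsum c n + (n+1)
      = ∑ a ∈ Finset.range (n+1), (c a * c (n-a) + 1) := by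
    rw [Finset.sum_add_distrib, gsum]; simp
  rw [h2, Finset.sum_congr rfl h1, Finset.sum_add_distrib, Finset.sum_add_distrib,
    reflect c n, gsum, Ssum]
  ring

private lemma R2_eq (A : Set ℕ) [DecidablePred (· ∈ A)] (n : ℕ) :
    R2 A n = qsum (fun a => if a ∈ A then 1 else 0) n := by
  have key : R2 A n = ∑ a ∈ Finset.range (n+1),
      if 2*a < n ∧ a ∈ A ∧ (n-a) ∈ A then 1 else 0 := by
    rw [← Finset.card_filter]
    set s := (Finset.range (n+1)).filter (fun a => 2*a < n ∧ a ∈ A ∧ (n-a) ∈ A) with hs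
    have hset : {p : ℕ × ℕ | p.1 < p.2 ∧ p.1 + p.2 = n ∧ p.1 ∈ A ∧ p.2 ∈ A}
        = ↑(s.image (fun a => (a, n-a))) := by
      ext ⟨x, y⟩
      simp only [Set.mem_setOf_eq, Finset.coe_image, Set.mem_image, Finset.mem_coe,
        Finset.mem_filter, Finset.mem_range, hs, Prod.mk.injEq]
      constructor
      · rintro ⟨h1, h2, h3, h4⟩
        refine ⟨x, ⟨by omega, by omega, h3, ?_⟩, rfl, by omega⟩
        rw [show n - x = y by omega]; exact h4
      · rintro ⟨a, ⟨ha1, ha2, ha3, ha4⟩, rfl, rfl⟩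
        exact ⟨by omega, by omega, ha3, ha4⟩
    rw [R2, hset, Set.ncard_coe_finset, Finset.card_image_of_injOn]
    intro a _ b _ hab
    exact (Prod.mk.injEq _ _ _ _ ▸ hab).1
  rw [key, qsum]
  refine Finset.sum_congr rfl fun a _ => ?_
  by_cases h1 : 2*a < n <;> by_cases h2 : a ∈ A <;> by_cases h3 : (n-a) ∈ A <;>
    simp [h1, h2, h3]

theorem stmt_2 (N : ℕ) (hN : 0 < N) (A : Set ℕ)
    (h : ∀ n, 2 * N - 1 ≤ n → R2 A n = R2 Aᶜ n) :
    (A ∩ Set.Icc 0 (2 * N - 1)).ncard = N ∧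
      ∀ m, N ≤ m → ((2 * m ∈ A ↔ m ∈ A) ∧ (2 * m + 1 ∈ A ↔ m ∉ A)) := by
  classical
  set c : ℕ → ℕ := fun a => if a ∈ A then 1 else 0 with hc
  set c' : ℕ → ℕ := fun a => if a ∈ Aᶜ then 1 else 0 with hc'
  have hcc : ∀ a, c a + c' a = 1 := by
    intro a; by_cases ha : a ∈ A <;> simp [hc, hc', ha]
  have hcc' : ∀ a, c' a + c a = 1 := fun a => by rw [add_comm]; exact hcc a
  have hc1 : ∀ a, c a ≤ 1 := fun a => by by_cases ha : a ∈ A <;> simp [hc, ha]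
  have hc1' : ∀ a, c' a ≤ 1 := fun a => by simp only [hc']; split <;> simp
  have hq : ∀ n, 2 * N - 1 ≤ n → qsum c n = qsum c' n := by
    intro n hn
    rw [← R2_eq, ← R2_eq]; exact h n hn
  -- S values at odd arguments
  have Sodd : ∀ m, 2 * N - 1 ≤ 2*m+1 → Ssum c (2*m+1) = m + 1 := by
    intro m hm
    have k1 := key c c' hcc (2*m+1)
    have g1 := gsum_odd c m
    have g2 := gsum_odd c' m
    have q1 := hq (2*m+1) hm
    omega
  -- S values at even arguments: 2 * Ssum c (2m) = 2m + 2 * c m for m ≥ N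
  have Seven : ∀ m, N ≤ m → Ssum c (2*m) = m + c m := by
    intro m hm
    have hm' : 2 * N - 1 ≤ 2*m := by omega
    have k1 := key c c' hcc (2*m)
    have g1 := gsum_even c hc1 m
    have g2 := gsum_even c' hc1' m
    have q1 := hq (2*m) hm'
    have hcm := hcc m
    omega
  have hstep : ∀ k, Ssum c (k+1) = Ssum c k + c (k+1) := by
    intro k; rw [Ssum, Ssum, Finset.sum_range_succ]
  constructor
  · -- cardinality goal
    have hset : A ∩ Set.Icc 0 (2*N-1)
        = ↑((Finset.range (2*N-1+1)).filter (· ∈ A)) := by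
      ext x
      simp only [Set.mem_inter_iff, Set.mem_Icc, Finset.coe_filter, Finset.mem_range,
        Set.mem_setOf_eq]
      constructor
      · rintro ⟨hx1, _, hx2⟩; exact ⟨by omega, hx1⟩
      · rintro ⟨hx1, hx2⟩; exact ⟨hx2, by omega, by omega⟩
    rw [hset, Set.ncard_coe_finset, Finset.card_filter]
    have : ∑ a ∈ Finset.range (2*N-1+1), (if a ∈ A then 1 else 0) = Ssum c (2*N-1) := rfl
    rw [this]
    have h2 : 2*N-1 = 2*(N-1)+1 := by omega
    rw [h2, Sodd (N-1) (by omega)]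
    omega
  · intro m hm
    have h2m1 : Ssum c (2*m-1) = m := by
      have h2 : 2*m-1 = 2*(m-1)+1 := by omega
      rw [h2, Sodd (m-1) (by omega)]
      omega
    have h2m : Ssum c (2*m) = m + c m := Seven m hm
    have h2m1' : Ssum c (2*m+1) = m + 1 := Sodd m (by omega)
    have e1 : Ssum c (2*m) = Ssum c (2*m-1) + c (2*m) := by
      have h2 := hstep (2*m-1)
      rw [show 2*m-1+1 = 2*m by omega] at h2
      exact h2
    have e2 : Ssum c (2*m+1) = Ssum c (2*m) + c (2*m+1) := hstep (2*m)
    have hcm := hcc m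
    have hceq : c (2*m) = c m := by omega
    have hcne : c (2*m+1) + c m = 1 := by omega
    constructor
    · by_cases h1 : 2*m ∈ A <;> by_cases h2 : m ∈ A <;> simp [hc, h1, h2] at hceq ⊢
    · by_cases h1 : 2*m+1 ∈ A <;> by_cases h2 : m ∈ A <;> simp [hc, h1, h2] at hcne ⊢
end

section
/- Let N be a positive integer and A ⊆ ℕ. If |A ∩ [0, 2N−1]| = N and for all m ≥ N one has (2m ∈ A ⟺ m ∈ A) and (2m+1 ∈ A ⟺ m ∉ A), then R_2(A,n) = R_2(ℕ\A, n) for all n ≥ 2N−1. -/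
open Finset in
open Classical in
lemma R2_cast (B : Set ℕ) (n : ℕ) :
    (R2 B n : ℤ) = ∑ a ∈ range (n+1),
      (if 2*a < n ∧ a ∈ B ∧ (n-a) ∈ B then (1:ℤ) else 0) := by
  have hset : {p : ℕ × ℕ | p.1 < p.2 ∧ p.1 + p.2 = n ∧ p.1 ∈ B ∧ p.2 ∈ B}
      = (fun a => (a, n - a)) '' (((range (n+1)).filter
          (fun a => 2*a < n ∧ a ∈ B ∧ (n-a) ∈ B) : Finset ℕ) : Set ℕ) := by
    ext p
    simp only [Set.mem_setOf_eq, Set.mem_image, coe_filter, mem_range]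
    constructor
    · rintro ⟨h1, h2, h3, h4⟩
      exact ⟨p.1, ⟨by omega, by omega, h3, by rw [show n - p.1 = p.2 by omega]; exact h4⟩,
        by rw [show n - p.1 = p.2 by omega]⟩
    · rintro ⟨a, ⟨ha, h2, h3, h4⟩, rfl⟩
      exact ⟨by omega, by omega, h3, h4⟩
  rw [R2, hset, Set.ncard_image_of_injOn (fun x _ y _ h => congrArg Prod.fst h),
    Set.ncard_coe_finset, Finset.sum_boole]

theorem stmt_3 (N : ℕ) (hN : 0 < N) (A : Set ℕ)
    (hcard : (A ∩ Set.Icc 0 (2 * N - 1)).ncard = N)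
    (hrec : ∀ m, N ≤ m → ((2 * m ∈ A ↔ m ∈ A) ∧ (2 * m + 1 ∈ A ↔ m ∉ A))) :
    ∀ n, 2 * N - 1 ≤ n → R2 A n = R2 Aᶜ n := by
  classical
  intro n hn
  set f : ℕ → ℤ := fun a => if a ∈ A then 1 else 0 with hf
  -- f(2m) = f(m), f(2m+1) = 1 - f(m) for m ≥ N
  have hfe : ∀ m, N ≤ m → f (2*m) = f m := by
    intro m hm
    simp only [hf]
    exact if_congr (hrec m hm).1 rfl rfl
  have hfo : ∀ m, N ≤ m → f (2*m+1) = 1 - f m := by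
    intro m hm
    by_cases hmA : m ∈ A
    · simp [hf, hmA, show 2*m+1 ∉ A from fun h => (hrec m hm).2.mp h hmA]
    · simp [hf, hmA, (hrec m hm).2.mpr hmA]
  -- base of the counting function
  have hbase : ∑ a ∈ Finset.range (2*N), f a = (N : ℤ) := by
    have hseteq : A ∩ Set.Icc 0 (2 * N - 1)
        = (((Finset.range (2*N)).filter (· ∈ A) : Finset ℕ) : Set ℕ) := by
      ext x
      simp only [Set.mem_inter_iff, Set.mem_Icc, Finset.coe_filter, Finset.mem_range,
        Set.mem_setOf_eq]
      constructor
      · rintro ⟨h1, _, h2⟩; exact ⟨by omega, h1⟩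
      · rintro ⟨h1, h2⟩; exact ⟨h2, by omega, by omega⟩
    have := hcard
    rw [hseteq, Set.ncard_coe_finset] at this
    calc ∑ a ∈ Finset.range (2*N), f a
        = (((Finset.range (2*N)).filter (· ∈ A)).card : ℤ) := by
          rw [← Finset.sum_boole]
      _ = (N : ℤ) := by rw [this]
  -- counting function on even-length initial segments
  have hS : ∀ k, ∑ a ∈ Finset.range (2*N + 2*k), f a = (N : ℤ) + k := by
    intro k
    induction k with
    | zero => simpa using hbase
    | succ k ih =>
      have h1 : 2*N + 2*(k+1) = (2*N + 2*k) + 1 + 1 := by ring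
      rw [h1, Finset.sum_range_succ, Finset.sum_range_succ, ih]
      have hm : N ≤ N + k := by omega
      have he : f (2*N + 2*k) = f (N + k) := by
        have := hfe (N+k) hm; rw [show 2*(N+k) = 2*N+2*k by ring] at this; exact this
      have ho : f (2*N + 2*k + 1) = 1 - f (N + k) := by
        have := hfo (N+k) hm; rw [show 2*(N+k) = 2*N+2*k by ring] at this; exact this
      rw [he, ho]; push_cast; ring
  -- the reflection a ↦ n - a
  have hrefl : ∑ a ∈ Finset.range (n+1), (if 2*a < n then f (n-a) else 0)
      = ∑ a ∈ Finset.range (n+1), (if n < 2*a then f a else 0) := by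
    refine Finset.sum_nbij' (fun a => n - a) (fun a => n - a) ?_ ?_ ?_ ?_ ?_
    · intro a ha; simp only [Finset.mem_range] at *; omega
    · intro a ha; simp only [Finset.mem_range] at *; omega
    · intro a ha; simp only [Finset.mem_range] at ha; show n - (n - a) = a; omega
    · intro a ha; simp only [Finset.mem_range] at ha; show n - (n - a) = a; omega
    · intro a ha
      simp only [Finset.mem_range] at ha
      show (if 2*a < n then f (n-a) else 0) = (if n < 2*(n-a) then f (n-a) else 0)
      exact if_congr (by omega) rfl rfl
  -- trichotomy split of the full sum
  have hsplit : ∑ a ∈ Finset.range (n+1), f a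
      = ∑ a ∈ Finset.range (n+1), (if 2*a < n then f a else 0)
        + ∑ a ∈ Finset.range (n+1), (if n < 2*a then f a else 0)
        + ∑ a ∈ Finset.range (n+1), (if 2*a = n then f a else 0) := by
    rw [← Finset.sum_add_distrib, ← Finset.sum_add_distrib]
    refine Finset.sum_congr rfl fun a _ => ?_
    split_ifs <;> first | ring1 | (exfalso; omega)
  -- the count of a with 2a < n
  have hcount : ∑ a ∈ Finset.range (n+1), (if 2*a < n then (1:ℤ) else 0)
      = (((n+1)/2 : ℕ) : ℤ) := by
    rw [Finset.sum_boole]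
    congr 1
    have : (Finset.range (n+1)).filter (fun a => 2*a < n) = Finset.range ((n+1)/2) := by
      ext a; simp only [Finset.mem_filter, Finset.mem_range]; omega
    rw [this, Finset.card_range]
  -- main computation
  rw [← Nat.cast_inj (R := ℤ), R2_cast, R2_cast, ← sub_eq_zero, ← Finset.sum_sub_distrib]
  refine Eq.trans (b := ∑ a ∈ Finset.range (n+1),
        ((if 2*a < n then f a else 0) + (if 2*a < n then f (n-a) else 0)
          - (if 2*a < n then (1:ℤ) else 0))) (Finset.sum_congr rfl fun a _ => ?_) ?_
  · simp only [hf, Set.mem_compl_iff]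
    split_ifs <;> simp_all
  rw [Finset.sum_sub_distrib, Finset.sum_add_distrib, hrefl, hcount]
  -- finish by parity
  rcases Nat.even_or_odd n with ⟨m, hm⟩ | ⟨m, hm⟩
  · -- n = m + m, even; note n ≥ 2N so m ≥ N
    have hmN : N ≤ m := by omega
    have hmid : ∑ a ∈ Finset.range (n+1), (if 2*a = n then f a else 0) = f m := by
      rw [Finset.sum_eq_single_of_mem m (by simp only [Finset.mem_range]; omega)
        (fun b _ hb => if_neg (by omega))]
      exact if_pos (by omega)
    have hStot : ∑ a ∈ Finset.range (n+1), f a = (m : ℤ) + f m := by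
      have h1 : n + 1 = (2*N + 2*(m - N)) + 1 := by omega
      rw [h1, Finset.sum_range_succ, hS (m - N),
        show 2*N + 2*(m-N) = 2*m by omega, hfe m hmN]
      have h3 : ((m - N : ℕ) : ℤ) = (m : ℤ) - N := by omega
      rw [h3]; ring
    have hhalf : (((n+1)/2 : ℕ) : ℤ) = (m : ℤ) := by omega
    rw [hhalf]
    linarith [hsplit, hmid, hStot]
  · -- n = 2m+1, odd
    have hmN : N ≤ m + 1 := by omega
    have hmid : ∑ a ∈ Finset.range (n+1), (if 2*a = n then f a else 0) = 0 :=
      Finset.sum_eq_zero fun a _ => if_neg (by omega)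
    have hStot : ∑ a ∈ Finset.range (n+1), f a = (m : ℤ) + 1 := by
      have h1 : n + 1 = 2*N + 2*(m + 1 - N) := by omega
      rw [h1, hS (m + 1 - N)]
      have h3 : ((m + 1 - N : ℕ) : ℤ) = (m : ℤ) + 1 - N := by omega
      rw [h3]; ring
    have hhalf : (((n+1)/2 : ℕ) : ℤ) = (m : ℤ) + 1 := by omega
    rw [hhalf]
    linarith [hsplit, hmid, hStot]
end

section
/- Let N be a positive integer and A ⊆ ℕ. If R_3(A,n) = R_3(ℕ\A, n) for all n ≥ 2N−1, then |A ∩ [0, 2N−1]| = N, and for all m ≥ N: 2m ∈ A if and only if m ∉ A, and 2m+1 ∈ A if and only if m ∈ A. -/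
open Finset

attribute [local instance] Classical.propDecidable

/-- The finite "line" a + b = n. -/
noncomputable def Ln (n : ℕ) : Finset (ℕ × ℕ) :=
  (Finset.range (n+1)).image (fun a => (a, n - a))

lemma mem_Ln {n : ℕ} {p : ℕ × ℕ} : p ∈ Ln n ↔ p.1 + p.2 = n := by
  simp only [Ln, mem_image, mem_range]
  constructor
  · rintro ⟨a, ha, rfl⟩; simp; omega
  · intro hp
    refine ⟨p.1, by omega, ?_⟩
    obtain ⟨a, b⟩ := p
    simp at hp ⊢
    omega

/-- counting function: |A ∩ [0,n]| as a Finset card. -/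
noncomputable def cA (A : Set ℕ) (n : ℕ) : ℕ :=
  ((Finset.range (n+1)).filter (fun k => k ∈ A)).card

noncomputable def Rord (A : Set ℕ) (n : ℕ) : ℕ :=
  ((Ln n).filter (fun p => p.1 ∈ A ∧ p.2 ∈ A)).card

noncomputable def dl (A : Set ℕ) (n : ℕ) : ℕ :=
  if n % 2 = 0 ∧ n / 2 ∈ A then 1 else 0

lemma R3_eq (A : Set ℕ) (n : ℕ) :
    R3 A n = ((Ln n).filter (fun p => p.1 ≤ p.2 ∧ p.1 ∈ A ∧ p.2 ∈ A)).card := by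
  rw [R3, ← Set.ncard_coe_finset]
  congr 1
  ext p
  simp [mem_Ln]
  tauto

lemma two_R3 (A : Set ℕ) (n : ℕ) : 2 * R3 A n = Rord A n + dl A n := by
  classical
  set P : ℕ × ℕ → Prop := fun p => p.1 ∈ A ∧ p.2 ∈ A with hP
  set S1 := (Ln n).filter (fun p => p.1 ≤ p.2 ∧ P p) with hS1
  set S2 := (Ln n).filter (fun p => p.2 ≤ p.1 ∧ P p) with hS2
  have hcard : S1.card = S2.card := by
    apply Finset.card_bij' (fun p _ => Prod.swap p) (fun p _ => Prod.swap p)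
    · intro p hp
      simp only [hS1, hS2, mem_filter, mem_Ln] at hp ⊢
      obtain ⟨h1, h2, h3, h4⟩ := hp
      exact ⟨by simpa [Prod.swap] using by omega, by simpa [Prod.swap] using h2, h4, h3⟩
    · intro p hp
      simp only [hS1, hS2, mem_filter, mem_Ln] at hp ⊢
      obtain ⟨h1, h2, h3, h4⟩ := hp
      exact ⟨by simpa [Prod.swap] using by omega, by simpa [Prod.swap] using h2, h4, h3⟩
    · intro p _; simp
    · intro p _; simp
  have hunion : S1 ∪ S2 = (Ln n).filter (fun p => P p) := by
    rw [hS1, hS2, ← Finset.filter_or]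
    apply Finset.filter_congr
    intro p _
    constructor
    · rintro (⟨_, hp⟩ | ⟨_, hp⟩) <;> exact hp
    · intro hp
      rcases le_total p.1 p.2 with hle | hle
      · exact Or.inl ⟨hle, hp⟩
      · exact Or.inr ⟨hle, hp⟩
  have hinter : S1 ∩ S2 = (Ln n).filter (fun p => p.1 = p.2 ∧ P p) := by
    rw [hS1, hS2, ← Finset.filter_and]
    apply Finset.filter_congr
    intro p _
    constructor
    · rintro ⟨⟨h1, hp⟩, ⟨h2, _⟩⟩; exact ⟨le_antisymm h1 h2, hp⟩
    · rintro ⟨heq, hp⟩; exact ⟨⟨le_of_eq heq, hp⟩, ⟨le_of_eq heq.symm, hp⟩⟩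
  have hintercard : (S1 ∩ S2).card = dl A n := by
    rw [hinter, dl]
    split_ifs with hcond
    · have : (Ln n).filter (fun p => p.1 = p.2 ∧ P p) = {(n/2, n/2)} := by
        ext p
        simp only [mem_filter, mem_Ln, Finset.mem_singleton, hP]
        constructor
        · rintro ⟨hsum, heq, hp1, hp2⟩
          obtain ⟨a, b⟩ := p
          simp_all
          omega
        · rintro rfl
          exact ⟨by omega, rfl, hcond.2, hcond.2⟩
      rw [this]; simp
    · rw [Finset.card_eq_zero]
      rw [Finset.eq_empty_iff_forall_notMem]
      rintro p hp
      simp only [mem_filter, mem_Ln, hP] at hp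
      obtain ⟨hsum, heq, hp1, hp2⟩ := hp
      apply hcond
      have h2 : p.1 * 2 = n := by omega
      constructor
      · omega
      · have : n / 2 = p.1 := by omega
        rw [this]; exact hp1
  have hcup : (S1 ∪ S2).card + (S1 ∩ S2).card = S1.card + S2.card :=
    Finset.card_union_add_card_inter S1 S2
  have hR3 : R3 A n = S1.card := R3_eq A n
  rw [hR3]
  rw [Rord, ← hunion]
  omega

lemma Ln_eq_image (n : ℕ) : Ln n = (Finset.range (n+1)).image (fun a => (a, n - a)) := rfl

lemma Ln_card (n : ℕ) : (Ln n).card = n + 1 := by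
  rw [Ln_eq_image, Finset.card_image_of_injOn, Finset.card_range]
  intro a _ b _ hab
  exact congrArg Prod.fst hab

lemma sum_fst (A : Set ℕ) (n : ℕ) :
    ∑ p ∈ Ln n, (if p.1 ∈ A then 1 else 0) = cA A n := by
  rw [Ln_eq_image, Finset.sum_image (by intro a _ b _ hab; exact congrArg Prod.fst hab)]
  rw [cA, Finset.card_filter]

lemma sum_snd (A : Set ℕ) (n : ℕ) :
    ∑ p ∈ Ln n, (if p.2 ∈ A then 1 else 0) = cA A n := by
  rw [Ln_eq_image, Finset.sum_image (by intro a _ b _ hab; exact congrArg Prod.fst hab)]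
  simp only
  have := Finset.sum_range_reflect (fun j => if j ∈ A then (1:ℕ) else 0) (n+1)
  simp only [Nat.add_sub_cancel] at this
  rw [cA, Finset.card_filter]
  rw [← this]

lemma Rord_compl (A : Set ℕ) (n : ℕ) :
    Rord A n + (n + 1) = Rord Aᶜ n + 2 * cA A n := by
  have e1 : Rord A n = ∑ p ∈ Ln n, (if p.1 ∈ A ∧ p.2 ∈ A then 1 else 0) := by
    rw [Rord, Finset.card_filter]
  have e2 : Rord Aᶜ n = ∑ p ∈ Ln n, (if p.1 ∈ Aᶜ ∧ p.2 ∈ Aᶜ then 1 else 0) := by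
    rw [Rord, Finset.card_filter]
    exact Finset.sum_congr rfl (fun p _ => by congr 1)
  have e3 : (n + 1 : ℕ) = ∑ p ∈ Ln n, 1 := by rw [Finset.sum_const, smul_eq_mul, mul_one, Ln_card]
  have main : ∑ p ∈ Ln n, ((if p.1 ∈ A ∧ p.2 ∈ A then 1 else 0) + 1)
      = ∑ p ∈ Ln n, ((if p.1 ∈ Aᶜ ∧ p.2 ∈ Aᶜ then 1 else 0)
          + ((if p.1 ∈ A then 1 else 0) + (if p.2 ∈ A then 1 else 0))) := by
    apply Finset.sum_congr rfl
    intro p _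
    by_cases h1 : p.1 ∈ A <;> by_cases h2 : p.2 ∈ A <;> simp [h1, h2]
  rw [Finset.sum_add_distrib, Finset.sum_add_distrib, Finset.sum_add_distrib] at main
  rw [← e1, ← e2, ← e3, sum_fst, sum_snd] at main
  omega

lemma cA_succ (A : Set ℕ) (n : ℕ) :
    cA A (n+1) = cA A n + (if n+1 ∈ A then 1 else 0) := by
  rw [cA, cA, Finset.range_add_one, Finset.filter_insert]
  split_ifs with hmem
  · rw [Finset.card_insert_of_notMem (by simp)]
  · rfl

theorem stmt_4 (N : ℕ) (hN : 0 < N) (A : Set ℕ)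
    (h : ∀ n, 2 * N - 1 ≤ n → R3 A n = R3 Aᶜ n) :
    (A ∩ Set.Icc 0 (2 * N - 1)).ncard = N ∧
      ∀ m, N ≤ m → ((2 * m ∈ A ↔ m ∉ A) ∧ (2 * m + 1 ∈ A ↔ m ∈ A)) := by
  classical
  have key : ∀ n, 2 * N - 1 ≤ n → (n + 1) + dl Aᶜ n = 2 * cA A n + dl A n := by
    intro n hn
    have h1 := h n hn
    have e1 := two_R3 A n
    have e2 := two_R3 Aᶜ n
    have e3 := Rord_compl A n
    omega
  -- odd case: dl's vanish
  have keyodd : ∀ n, 2 * N - 1 ≤ n → n % 2 = 1 → 2 * cA A n = n + 1 := by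
    intro n hn hodd
    have := key n hn
    simp [dl, hodd] at this
    omega
  have first : cA A (2 * N - 1) = N := by
    have := keyodd (2 * N - 1) le_rfl (by omega)
    omega
  have hset : (A ∩ Set.Icc 0 (2 * N - 1)).ncard = cA A (2 * N - 1) := by
    rw [cA, ← Set.ncard_coe_finset]
    congr 1
    ext x
    simp only [Set.mem_inter_iff, Set.mem_Icc, Finset.coe_filter, Finset.mem_range,
      Set.mem_setOf_eq]
    constructor
    · rintro ⟨hA, _, hx⟩; exact ⟨by omega, hA⟩
    · rintro ⟨hx, hA⟩; exact ⟨hA, by omega, by omega⟩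
  constructor
  · rw [hset]; exact first
  · intro m hm
    have hm1 : 1 ≤ m := le_trans hN hm
    have k1 : 2 * cA A (2 * m - 1) = 2 * m := by
      have := keyodd (2 * m - 1) (by omega) (by omega)
      omega
    have k3 : 2 * cA A (2 * m + 1) = 2 * m + 2 := by
      have := keyodd (2 * m + 1) (by omega) (by omega)
      omega
    have k2 : (2 * m + 1) + (if m ∈ Aᶜ then 1 else 0)
        = 2 * cA A (2 * m) + (if m ∈ A then 1 else 0) := by
      have := key (2 * m) (by omega)
      have hd1 : dl A (2 * m) = if m ∈ A then 1 else 0 := by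
        simp [dl, Nat.mul_div_cancel_left m (by norm_num : 0 < 2), Nat.mul_mod_right]
      have hd2 : dl Aᶜ (2 * m) = if m ∈ Aᶜ then 1 else 0 := by
        simp [dl, Nat.mul_div_cancel_left m (by norm_num : 0 < 2), Nat.mul_mod_right]
      rw [hd1, hd2] at this
      omega
    have s1 : cA A (2 * m) = cA A (2 * m - 1) + (if 2 * m ∈ A then 1 else 0) := by
      have := cA_succ A (2 * m - 1)
      have heq : 2 * m - 1 + 1 = 2 * m := by omega
      rw [heq] at this
      exact this
    have s2 : cA A (2 * m + 1) = cA A (2 * m) + (if 2 * m + 1 ∈ A then 1 else 0) :=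
      cA_succ A (2 * m)
    constructor
    · by_cases ha : m ∈ A <;> by_cases hb : 2 * m ∈ A <;>
        simp [ha, hb, Set.mem_compl_iff] at k1 k2 s1 ⊢ <;> omega
    · by_cases ha : m ∈ A <;> by_cases hb : 2 * m + 1 ∈ A <;>
        simp [ha, hb, Set.mem_compl_iff] at k2 k3 s1 s2 ⊢ <;> omega
end

section
/- Let A be a subset of ℕ and N a positive integer such that R_2(A,n) = R_2(ℕ\A,n) for all n ≥ 2N−1. Let m, k, i be integers with m ≥ N, i ≥ 0 and 0 ≤ k < 2^i. If k has an even number of ones in its binary representation, then m ∈ A if and only if 2^i·m + k ∈ A; if k has an odd number of ones in binary, then m ∈ A if and only if 2^i·m + k ∉ A. -/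
open scoped Classical

lemma R2_eq_s5 (A : Set ℕ) (n : ℕ) :
    R2 A n = ((Finset.range (n+1)).filter (fun a => 2*a < n ∧ a ∈ A ∧ (n-a) ∈ A)).card := by
  have hset : {p : ℕ × ℕ | p.1 < p.2 ∧ p.1 + p.2 = n ∧ p.1 ∈ A ∧ p.2 ∈ A}
      = (fun a => (a, n - a)) ''
        ↑((Finset.range (n+1)).filter (fun a => 2*a < n ∧ a ∈ A ∧ (n-a) ∈ A)) := by
    ext ⟨x, y⟩
    simp only [Set.mem_setOf_eq, Set.mem_image, Finset.coe_filter, Finset.mem_range,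
      Set.mem_setOf_eq, Prod.mk.injEq]
    constructor
    · rintro ⟨hlt, hsum, hx, hy⟩
      refine ⟨x, ⟨by omega, by omega, hx, ?_⟩, rfl, by omega⟩
      have hxy : n - x = y := by omega
      rw [hxy]; exact hy
    · rintro ⟨a, ⟨h1, h2, h3, h4⟩, rfl, rfl⟩
      exact ⟨by omega, by omega, h3, h4⟩
  rw [R2, hset, Set.ncard_image_of_injOn, Set.ncard_coe_finset]
  intro a _ b _ hab
  exact (Prod.mk.injEq _ _ _ _ ▸ hab).1

noncomputable def SA (A : Set ℕ) (n : ℕ) : ℕ := ((Finset.range (n+1)).filter (· ∈ A)).card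

lemma sum_split (A : Set ℕ) (n : ℕ) :
    SA A n = (∑ a ∈ (Finset.range (n+1)).filter (fun a => 2*a < n),
        ((if a ∈ A then 1 else 0) + (if (n-a) ∈ A then 1 else 0)))
      + (if Even n ∧ n/2 ∈ A then 1 else 0) := by
  classical
  set chi : ℕ → ℕ := fun a => if a ∈ A then 1 else 0 with hchi
  have h0 : SA A n = ∑ a ∈ Finset.range (n+1), chi a := Finset.card_filter _ _
  have h1 := Finset.sum_filter_add_sum_filter_not (Finset.range (n+1)) (fun a => 2*a < n) chi
  have h2 := Finset.sum_filter_add_sum_filter_not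
    ((Finset.range (n+1)).filter (fun a => ¬ 2*a < n)) (fun a => 2*a = n) chi
  -- middle term
  have hmid : (((Finset.range (n+1)).filter (fun a => ¬ 2*a < n)).filter (fun a => 2*a = n))
      = if Even n then {n/2} else ∅ := by
    rw [Finset.filter_filter]
    ext a
    by_cases he : Even n
    · have ht := he
      obtain ⟨t, ht⟩ := ht
      simp only [if_pos he, Finset.mem_filter, Finset.mem_range, Finset.mem_singleton]
      omega
    · have h2n : n % 2 = 1 := by
        rcases Nat.even_or_odd n with h' | h'
        · exact absurd h' he
        · exact Nat.odd_iff.mp h'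
      simp only [if_neg he, Finset.mem_filter, Finset.mem_range, Finset.notMem_empty,
        iff_false, not_and]
      omega
  have hmid2 : (∑ a ∈ ((Finset.range (n+1)).filter (fun a => ¬ 2*a < n)).filter
      (fun a => 2*a = n), chi a) = if Even n ∧ n/2 ∈ A then 1 else 0 := by
    rw [hmid]
    by_cases he : Even n
    · rw [if_pos he, Finset.sum_singleton, hchi]
      by_cases hA : n / 2 ∈ A
      · simp [hA, he]
      · simp [hA]
    · simp [he]
  -- upper part reindexed
  have hup : (∑ a ∈ ((Finset.range (n+1)).filter (fun a => ¬ 2*a < n)).filter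
      (fun a => ¬ 2*a = n), chi a)
      = ∑ a ∈ (Finset.range (n+1)).filter (fun a => 2*a < n), chi (n - a) := by
    apply Finset.sum_nbij' (i := fun a => n - a) (j := fun a => n - a)
    · intro a ha
      simp only [Finset.mem_filter, Finset.mem_range] at ha ⊢
      omega
    · intro a ha
      simp only [Finset.mem_filter, Finset.mem_range] at ha ⊢
      omega
    · intro a ha
      simp only [Finset.mem_filter, Finset.mem_range] at ha
      omega
    · intro a ha
      simp only [Finset.mem_filter, Finset.mem_range] at ha
      omega
    · intro a ha
      simp only [Finset.mem_filter, Finset.mem_range] at ha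
      congr 1
      omega
  rw [h0, ← h1, ← h2, hmid2, hup, Finset.sum_add_distrib]
  simp only [hchi]
  omega

lemma master (A : Set ℕ) (n : ℕ) (hEq : R2 A n = R2 Aᶜ n) :
    SA A n = (n+1)/2 + (if Even n ∧ n/2 ∈ A then 1 else 0) := by
  classical
  have hcard : ((Finset.range (n+1)).filter (fun a => 2*a < n)).card = (n+1)/2 := by
    have hs : (Finset.range (n+1)).filter (fun a => 2*a < n) = Finset.range ((n+1)/2) := by
      ext a
      simp only [Finset.mem_filter, Finset.mem_range]
      omega
    rw [hs, Finset.card_range]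
  set s := (Finset.range (n+1)).filter (fun a => 2*a < n) with hsdef
  have hR2A : R2 A n = ∑ a ∈ s, (if a ∈ A ∧ (n-a) ∈ A then 1 else 0) := by
    rw [R2_eq_s5, Finset.card_filter, hsdef, Finset.sum_filter]
    apply Finset.sum_congr rfl
    intro a _
    by_cases h1 : 2*a < n <;> by_cases h2 : a ∈ A ∧ (n-a) ∈ A <;> simp [h1, h2]
  have hR2C : R2 Aᶜ n = ∑ a ∈ s, (if a ∉ A ∧ (n-a) ∉ A then 1 else 0) := by
    rw [R2_eq_s5, Finset.card_filter, hsdef, Finset.sum_filter]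
    apply Finset.sum_congr rfl
    intro a _
    by_cases h1 : 2*a < n <;> by_cases h2 : a ∉ A ∧ (n-a) ∉ A <;>
      simp [h1, h2, Set.mem_compl_iff] <;> tauto
  have hBXC : (∑ a ∈ s, (if a ∈ A ∧ (n-a) ∈ A then 1 else 0))
      + (∑ a ∈ s, (if (a ∈ A ∧ (n-a) ∉ A) ∨ (a ∉ A ∧ (n-a) ∈ A) then 1 else 0))
      + (∑ a ∈ s, (if a ∉ A ∧ (n-a) ∉ A then 1 else 0)) = (n+1)/2 := by
    rw [← hcard, Finset.card_eq_sum_ones, ← Finset.sum_add_distrib, ← Finset.sum_add_distrib]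
    apply Finset.sum_congr rfl
    intro a _
    by_cases h1 : a ∈ A <;> by_cases h2 : (n-a) ∈ A <;> simp [h1, h2]
  have hS : SA A n = 2 * (∑ a ∈ s, (if a ∈ A ∧ (n-a) ∈ A then 1 else 0))
      + (∑ a ∈ s, (if (a ∈ A ∧ (n-a) ∉ A) ∨ (a ∉ A ∧ (n-a) ∈ A) then 1 else 0))
      + (if Even n ∧ n/2 ∈ A then 1 else 0) := by
    rw [sum_split, ← hsdef]
    rw [Finset.mul_sum, ← Finset.sum_add_distrib]
    congr 1
    apply Finset.sum_congr rfl
    intro a _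
    by_cases h1 : a ∈ A <;> by_cases h2 : (n-a) ∈ A <;> simp [h1, h2]
  rw [hR2A, hR2C] at hEq
  omega

lemma SA_succ (A : Set ℕ) (n : ℕ) : SA A (n+1) = SA A n + (if n+1 ∈ A then 1 else 0) := by
  classical
  unfold SA
  rw [Finset.range_add_one, Finset.filter_insert]
  by_cases hA : n+1 ∈ A
  · rw [if_pos hA, if_pos hA, Finset.card_insert_of_notMem (by simp)]
  · rw [if_neg hA, if_neg hA]
    omega

lemma L12 (A : Set ℕ) (N : ℕ) (hN : 0 < N)
    (h : ∀ n, 2*N-1 ≤ n → R2 A n = R2 Aᶜ n) (m : ℕ) (hm : N ≤ m) :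
    (2*m ∈ A ↔ m ∈ A) ∧ (2*m+1 ∈ A ↔ m ∉ A) := by
  classical
  have h1 := master A (2*m-1) (h _ (by omega))
  have h2 := master A (2*m) (h _ (by omega))
  have h3 := master A (2*m+1) (h _ (by omega))
  have e1 : ¬ (Even (2*m-1) ∧ (2*m-1)/2 ∈ A) := by
    rintro ⟨he, -⟩; rw [Nat.even_iff] at he; omega
  have e3 : ¬ (Even (2*m+1) ∧ (2*m+1)/2 ∈ A) := by
    rintro ⟨he, -⟩; rw [Nat.even_iff] at he; omega
  have e2 : (if Even (2*m) ∧ (2*m)/2 ∈ A then (1:ℕ) else 0) = (if m ∈ A then 1 else 0) := by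
    have hme : (2*m)/2 = m := by omega
    rw [hme]
    by_cases hA : m ∈ A
    · simp [hA, even_two_mul]
    · simp [hA]
  rw [if_neg e1] at h1
  rw [if_neg e3] at h3
  rw [e2] at h2
  have s2 := SA_succ A (2*m-1)
  rw [show 2*m-1+1 = 2*m from by omega] at s2
  have s3 := SA_succ A (2*m)
  by_cases hA : m ∈ A <;> by_cases hB : 2*m ∈ A <;> by_cases hC : 2*m+1 ∈ A <;>
    simp only [hA, hB, hC, if_true, if_false, if_pos, if_neg, not_true, not_false_iff] at * <;>
    first | (exfalso; omega) | simp [hA, hB, hC] <;> omega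

lemma count_bits (k : ℕ) :
    ((Nat.digits 2 k).count 1) = (Nat.digits 2 (k/2)).count 1 + (if k % 2 = 1 then 1 else 0) := by
  rcases Nat.eq_zero_or_pos k with rfl | hk
  · simp
  · rw [Nat.digits_def' (by norm_num : 1 < 2) hk, List.count_cons]
    rcases Nat.mod_two_eq_zero_or_one k with hr | hr <;> simp [hr]

lemma main (A : Set ℕ) (N : ℕ) (hN : 0 < N)
    (h : ∀ n, 2*N-1 ≤ n → R2 A n = R2 Aᶜ n) (m : ℕ) (hm : N ≤ m) :
    ∀ i k, k < 2^i → (2^i*m+k ∈ A ↔ (Even ((Nat.digits 2 k).count 1) ↔ m ∈ A)) := by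
  intro i
  induction i with
  | zero =>
    intro k hk
    have hk0 : k = 0 := by simpa using hk
    subst hk0
    simp
  | succ i ih =>
    intro k hk
    have hpow : 2^(i+1) = 2*2^i := by ring
    have hq : k/2 < 2^i := by omega
    have hm' : N ≤ 2^i*m + k/2 := by
      have h1 : m ≤ 2^i*m := Nat.le_mul_of_pos_left m (by positivity)
      omega
    have ihq := ih (k/2) hq
    obtain ⟨hL2, hL1⟩ := L12 A N hN h (2^i*m + k/2) hm'
    have hpm : 2^(i+1)*m = 2*(2^i*m) := by rw [hpow]; ring
    have hcount := count_bits k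
    rcases Nat.mod_two_eq_zero_or_one k with hr | hr
    · have hkey : 2^(i+1)*m + k = 2*(2^i*m + k/2) := by omega
      rw [hkey, hL2, ihq, hcount, hr]
      simp
    · have hkey : 2^(i+1)*m + k = 2*(2^i*m + k/2) + 1 := by omega
      rw [hkey, hL1, ihq, hcount, hr]
      simp only [if_pos, Nat.even_add_one]
      tauto

theorem stmt_5 (A : Set ℕ) (N : ℕ) (hN : 0 < N)
    (h : ∀ n, 2 * N - 1 ≤ n → R2 A n = R2 Aᶜ n)
    (m k i : ℕ) (hm : N ≤ m) (hk : k < 2 ^ i) :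
    (Even ((Nat.digits 2 k).count 1) → (m ∈ A ↔ 2 ^ i * m + k ∈ A)) ∧
      (Odd ((Nat.digits 2 k).count 1) → (m ∈ A ↔ 2 ^ i * m + k ∉ A)) := by
  have H := main A N hN h m hm i k hk
  constructor
  · intro he
    rw [H]
    tauto
  · intro ho
    have hne := Nat.not_even_iff_odd.mpr ho
    rw [H]
    tauto
end

section
/- Let n ≥ 1 and let (y,z) be nonnegative integers with y + z = n, 0 ≤ y < z. Suppose the binary digits of n in positions 3k, 3k+1, 3k+2 are (1,0,1) and the binary digits of z in positions 3k, 3k+1, 3k+2 are (0,1,0), and Σ_{i≥3k+3} ε_i^{(y)} 2^i < Σ_{i≥3k+3} ε_i^{(z)} 2^i. Then the digits of y in positions 3k+1 and 3k+2 are 1 and 0 respectively. -/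
/-! Read the three digits of `m` at positions `a, a+1, a+2` as the number `m / 2^a % 8`.
For `n` this block is `5` and for `z` it is `2`; adding `y` and `z` carries at most `1` into
position `a` (`a = 3k`), so the block of `y` is `3` or `2`, i.e. its upper two digits are `1, 0`. -/

theorem Nat.testBit_add_eq_testBit_div_two_pow_mod_eight (m a : ℕ) {j : ℕ} (hj : j < 3) :
    m.testBit (a + j) = (m / 2 ^ a % 8).testBit j := by
  rw [show 8 = 2 ^ 3 from rfl, Nat.testBit_mod_two_pow, Nat.testBit_div_two_pow, add_comm]
  simp [hj]

theorem Nat.testBit_triple_eq_iff (m a : ℕ) (b₀ b₁ b₂ : Bool) :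
    (m.testBit a, m.testBit (a + 1), m.testBit (a + 2)) = (b₀, b₁, b₂) ↔
      m / 2 ^ a % 8 = b₀.toNat + 2 * b₁.toNat + 4 * b₂.toNat := by
  rw [← Nat.add_zero a, Nat.testBit_add_eq_testBit_div_two_pow_mod_eight m a (by norm_num),
    Nat.testBit_add_eq_testBit_div_two_pow_mod_eight m a (by norm_num : 1 < 3),
    Nat.testBit_add_eq_testBit_div_two_pow_mod_eight m a (by norm_num : 2 < 3), Nat.add_zero]
  have hr : m / 2 ^ a % 8 < 8 := Nat.mod_lt _ (by norm_num)
  generalize m / 2 ^ a % 8 = r at hr ⊢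
  interval_cases r <;> cases b₀ <;> cases b₁ <;> cases b₂ <;> decide

theorem stmt_12_general (n y z k : ℕ) (hyz : y + z = n)
    (hn3 : (n.testBit (3 * k), n.testBit (3 * k + 1), n.testBit (3 * k + 2))
        = (true, false, true))
    (hz3 : (z.testBit (3 * k), z.testBit (3 * k + 1), z.testBit (3 * k + 2))
        = (false, true, false)) :
    y.testBit (3 * k + 1) = true ∧ y.testBit (3 * k + 2) = false := by
  have hn : n / 2 ^ (3 * k) % 8 = 5 := (Nat.testBit_triple_eq_iff ..).1 hn3
  have hz : z / 2 ^ (3 * k) % 8 = 2 := (Nat.testBit_triple_eq_iff ..).1 hz3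
  have hcarry₀ := Nat.div_add_div_le_add_div (x := y) (y := z) (z := 2 ^ (3 * k))
  have hcarry₁ := Nat.add_div_le_div_add_div_add_one y z (2 ^ (3 * k))
  subst hyz
  obtain ⟨b₀, hy⟩ : ∃ b₀ : Bool,
      y / 2 ^ (3 * k) % 8 = b₀.toNat + 2 * true.toNat + 4 * false.toNat := by
    obtain hy | hy : y / 2 ^ (3 * k) % 8 = 2 ∨ y / 2 ^ (3 * k) % 8 = 3 := by omega
    exacts [⟨false, hy⟩, ⟨true, hy⟩]
  exact Prod.mk.inj (Prod.mk.inj ((Nat.testBit_triple_eq_iff ..).2 hy)).2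

theorem stmt_12 (n y z k : ℕ) (hn : 1 ≤ n) (hyz : y + z = n) (hlt : y < z)
    (hn3 : (n.testBit (3 * k), n.testBit (3 * k + 1), n.testBit (3 * k + 2))
        = (true, false, true))
    (hz3 : (z.testBit (3 * k), z.testBit (3 * k + 1), z.testBit (3 * k + 2))
        = (false, true, false))
    (hhigh : y / 2 ^ (3 * k + 3) < z / 2 ^ (3 * k + 3)) :
    y.testBit (3 * k + 1) = true ∧ y.testBit (3 * k + 2) = false :=
  stmt_12_general n y z k hyz hn3 hz3
end

section
/- Let y, z ∈ ℕ and L ≥ 0 with binary digits satisfying (ε_{L+1}^{(y)}, ε_{L+2}^{(y)}, ε_L^{(z)}, ε_{L+1}^{(z)}, ε_{L+2}^{(z)}) = (1,0,0,1,0). Set y' = y − 2^{L+1}, z' = z + 2^{L+1}. Then y' + z' = y + z, the digits satisfy (ε_{L+1}^{(y')}, ε_{L+2}^{(y')}, ε_L^{(z')}, ε_{L+1}^{(z')}, ε_{L+2}^{(z')}) = (0,0,0,0,1), and the total number of binary ones of y' plus that of z' is exactly one less than the total number of binary ones of y plus that of z. -/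
/-!
Subtracting `2^(L+1)` from `y` just clears the digit `1` of `y` at position `L+1`, and adding
`2^(L+1)` to `z` turns the block `010` of `z` at positions `L+2, L+1, L` into `100` by a single carry.
So `y` loses one binary digit `1` and `z` keeps as many as it had.
-/

namespace Nat

theorem count_one_digits_two_s13 (n : ℕ) :
    (digits 2 n).count 1 = n % 2 + (digits 2 (n / 2)).count 1 := by
  rcases n.eq_zero_or_pos with rfl | hn
  · simp
  · rw [digits_def' one_lt_two hn, List.count_cons]
    rcases n.mod_two_eq_zero_or_one with h | h <;> simp [h, add_comm]

theorem count_one_digits_two_add_two_pow {k n : ℕ} (h : n.testBit k = false) :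
    (digits 2 (n + 2 ^ k)).count 1 = (digits 2 n).count 1 + 1 := by
  induction k generalizing n with
  | zero =>
    have hn : n % 2 = 0 := by simpa [testBit_zero] using h
    rw [count_one_digits_two_s13 (n + _), count_one_digits_two_s13 n, pow_zero,
      show (n + 1) / 2 = n / 2 by omega]
    omega
  | succ k ih =>
    have hpow : 2 ^ (k + 1) = 2 * 2 ^ k := by ring
    rw [count_one_digits_two_s13 (n + _), count_one_digits_two_s13 n,
      show (n + 2 ^ (k + 1)) / 2 = n / 2 + 2 ^ k by omega, ih (by rwa [← testBit_add_one])]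
    omega

theorem testBit_add_two_pow {k n : ℕ} (h : n.testBit k = false) (i : ℕ) :
    (n + 2 ^ k).testBit i = (n.testBit i || decide (i = k)) := by
  induction k generalizing n i with
  | zero =>
    have hn : n % 2 = 0 := by simpa [testBit_zero] using h
    cases i with
    | zero => simp [testBit_zero, Nat.add_mod, hn]
    | succ i => simp [testBit_add_one, show (n + 1) / 2 = n / 2 by omega]
  | succ k ih =>
    have hpow : 2 ^ (k + 1) = 2 * 2 ^ k := by ring
    cases i with
    | zero => simp [testBit_zero, show (n + 2 ^ (k + 1)) % 2 = n % 2 by omega]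
    | succ i =>
      rw [testBit_add_one, testBit_add_one, show (n + 2 ^ (k + 1)) / 2 = n / 2 + 2 ^ k by omega,
        ih (by rwa [← testBit_add_one])]
      simp

theorem testBit_eq_false_of_testBit_add_two_pow {k n : ℕ} (h : (n + 2 ^ k).testBit k = true) :
    n.testBit k = false := by
  simpa [add_comm n, testBit_two_pow_add_eq] using h

end Nat

open Nat

theorem stmt_13 (y z L : ℕ)
    (h : (y.testBit (L + 1), y.testBit (L + 2),
          z.testBit L, z.testBit (L + 1), z.testBit (L + 2))
        = (true, false, false, true, false)) :
    (y - 2 ^ (L + 1)) + (z + 2 ^ (L + 1)) = y + z ∧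
    ((y - 2 ^ (L + 1)).testBit (L + 1), (y - 2 ^ (L + 1)).testBit (L + 2),
      (z + 2 ^ (L + 1)).testBit L, (z + 2 ^ (L + 1)).testBit (L + 1),
      (z + 2 ^ (L + 1)).testBit (L + 2))
        = (false, false, false, false, true) ∧
    (Nat.digits 2 (y - 2 ^ (L + 1))).count 1 + (Nat.digits 2 (z + 2 ^ (L + 1))).count 1 + 1
      = (Nat.digits 2 y).count 1 + (Nat.digits 2 z).count 1 := by
  simp only [Prod.mk.injEq] at h
  obtain ⟨hy1, hy2, hz0, hz1, hz2⟩ := h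
  obtain ⟨u, rfl⟩ := Nat.exists_eq_add_of_le' (ge_two_pow_of_testBit hy1)
  obtain ⟨w, rfl⟩ := Nat.exists_eq_add_of_le' (ge_two_pow_of_testBit hz1)
  replace hy1 := testBit_eq_false_of_testBit_add_two_pow hy1
  replace hz1 := testBit_eq_false_of_testBit_add_two_pow hz1
  simp only [testBit_add_two_pow hy1, testBit_add_two_pow hz1] at hy2 hz0 hz2
  simp only [Nat.add_left_cancel_iff, OfNat.ofNat_ne_one, decide_false, Bool.or_false,
    Nat.left_eq_add, one_ne_zero] at hy2 hz0 hz2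
  have carry : w + 2 ^ (L + 1) + 2 ^ (L + 1) = w + 2 ^ (L + 2) := by ring
  rw [Nat.add_sub_cancel, carry]
  refine ⟨by omega, ?_, ?_⟩
  · simp [testBit_add_two_pow hz2, hy1, hy2, hz0, hz1]
  · rw [count_one_digits_two_add_two_pow hy1, count_one_digits_two_add_two_pow hz1,
      count_one_digits_two_add_two_pow hz2]
    ring
end

section
/- Let y, z ∈ ℕ and L ≥ 0 with (ε_{L+1}^{(y)}, ε_{L+2}^{(y)}, ε_L^{(z)}, ε_{L+1}^{(z)}, ε_{L+2}^{(z)}) = (1,0,0,1,0) or (0,0,0,0,1). Then y and z lie in the same Thue–Morse class (both in A_0 or both in B_0) if and only if y' = y ∓ 2^{L+1}, z' = z ± 2^{L+1} (sign chosen so the digit pattern swaps between (1,0,0,1,0) and (0,0,0,0,1)) lie in different Thue–Morse classes. -/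
private def c1 (n : ℕ) : ℕ := (Nat.digits 2 n).count 1

private lemma c1_two_mul (q : ℕ) : c1 (2 * q) = c1 q := by
  rcases Nat.eq_zero_or_pos q with h | h
  · simp [h, c1]
  · unfold c1
    rw [Nat.digits_def' (by norm_num) (by omega)]
    simp [Nat.mul_div_cancel_left _ (by norm_num : 0 < 2), Nat.mul_mod_right]

private lemma c1_two_mul_add_one (q : ℕ) : c1 (2 * q + 1) = c1 q + 1 := by
  unfold c1
  rw [Nat.digits_def' (by norm_num) (by omega)]
  have h1 : (2 * q + 1) % 2 = 1 := by omega
  have h2 : (2 * q + 1) / 2 = q := by omega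
  rw [h1, h2]
  simp

private lemma c1_addpow : ∀ (k a : ℕ), a.testBit k = false → c1 (a + 2 ^ k) = c1 a + 1 := by
  intro k
  induction k with
  | zero =>
    intro a h
    rw [Nat.testBit_zero] at h
    have h2 : a % 2 = 0 := by simpa using h
    have ha : a = 2 * (a / 2) := by omega
    have e1 : c1 (a + 2 ^ 0) = c1 (a / 2) + 1 := by
      rw [pow_zero]
      conv_lhs => rw [ha]
      exact c1_two_mul_add_one _
    have e2 : c1 a = c1 (a / 2) := by conv_lhs => rw [ha, c1_two_mul]
    rw [e1, e2]
  | succ k ih =>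
    intro a h
    rw [Nat.testBit_succ] at h
    have hd := ih (a / 2) h
    rcases Nat.mod_two_eq_zero_or_one a with h2 | h2
    · have ha : a = 2 * (a / 2) := by omega
      have he : a + 2 ^ (k + 1) = 2 * (a / 2 + 2 ^ k) := by rw [pow_succ]; omega
      rw [he, c1_two_mul, hd]
      conv_rhs => rw [ha, c1_two_mul]
    · have ha : a = 2 * (a / 2) + 1 := by omega
      have he : a + 2 ^ (k + 1) = 2 * (a / 2 + 2 ^ k) + 1 := by rw [pow_succ]; omega
      rw [he, c1_two_mul_add_one, hd]
      conv_rhs => rw [ha, c1_two_mul_add_one]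

private lemma testBit_eq_div (a k : ℕ) : a.testBit k = decide (a / 2 ^ k % 2 = 1) :=
  Nat.testBit_eq_decide_div_mod_eq

/-- decomposition of a number with bit k set -/
private lemma exists_dec {k m : ℕ} (h : m.testBit k = true) :
    ∃ a, m = a + 2 ^ k ∧ a.testBit k = false := by
  have hq : m / 2 ^ k % 2 = 1 := by
    have h' := testBit_eq_div m k; rw [h] at h'
    exact of_decide_eq_true h'.symm
  have h1 := Nat.div_add_mod m (2 ^ k)
  have hr : m % 2 ^ k < 2 ^ k := Nat.mod_lt _ (by positivity)
  obtain ⟨q, hq'⟩ : ∃ q, m / 2 ^ k = 2 * q + 1 :=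
    ⟨m / 2 ^ k / 2, by generalize m / 2 ^ k = x at hq ⊢; omega⟩
  rw [hq'] at h1
  have hrng : 2 ^ k * (2 * q + 1) = 2 ^ k * (2 * q) + 2 ^ k := by ring
  have hge : 2 ^ k ≤ m := by omega
  refine ⟨m - 2 ^ k, by omega, ?_⟩
  rw [testBit_eq_div]
  have ha : m - 2 ^ k = 2 ^ k * (2 * q) + m % 2 ^ k := by omega
  rw [ha, Nat.mul_add_div (by positivity), Nat.div_eq_of_lt hr]
  have hz : (2 * q + 0) % 2 = 0 := by omega
  simp [hz]

/-- adding 2^k when bit k is clear does not change bit k+1 -/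
private lemma bit_above {k a : ℕ} (h : a.testBit k = false) :
    (a + 2 ^ k).testBit (k + 1) = a.testBit (k + 1) := by
  have hp : (2:ℕ) ^ (k + 1) = 2 ^ k * 2 := pow_succ 2 k
  have hkpos : (0:ℕ) < 2 ^ k := by positivity
  have hk1pos : (0:ℕ) < 2 ^ (k + 1) := by positivity
  obtain ⟨t, s, hs2, hdec, hts, hss⟩ : ∃ t s, s < 2 ^ (k + 1) ∧ a = 2 ^ (k + 1) * t + s ∧
      a / 2 ^ (k + 1) = t ∧ a % 2 ^ (k + 1) = s :=
    ⟨a / 2 ^ (k + 1), a % 2 ^ (k + 1), Nat.mod_lt _ hk1pos, (Nat.div_add_mod a _).symm, rfl, rfl⟩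
  have hsk : s < 2 ^ k := by
    have h4 : s.testBit k = false := by rw [← hss, Nat.testBit_mod_two_pow, h]; simp
    have h5 : s / 2 ^ k % 2 = 0 := by
      have h' := testBit_eq_div s k; rw [h4] at h'
      have h'' := of_decide_eq_false h'.symm
      generalize s / 2 ^ k = u at h'' ⊢; omega
    have h8 := Nat.div_add_mod s (2 ^ k)
    have h9 : s % 2 ^ k < 2 ^ k := Nat.mod_lt _ hkpos
    generalize hG : s / 2 ^ k = u at h5 h8
    have h6 : u < 2 := by
      by_contra hc
      push_neg at hc
      have hm : 2 ^ k * 2 ≤ 2 ^ k * u := Nat.mul_le_mul_left _ hc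
      omega
    have h7 : u = 0 := by omega
    rw [h7, Nat.mul_zero] at h8
    omega
  have key : (a + 2 ^ k) / 2 ^ (k + 1) = a / 2 ^ (k + 1) := by
    have heq : a + 2 ^ k = 2 ^ (k + 1) * t + (s + 2 ^ k) := by omega
    rw [heq, Nat.mul_add_div hk1pos, Nat.div_eq_of_lt (by omega), hts]
    omega
  rw [testBit_eq_div, testBit_eq_div, key]

/-- adding 2^k does not change bits below k -/
private lemma bit_below {k j a : ℕ} (hj : j < k) :
    (a + 2 ^ k).testBit j = a.testBit j := by
  rw [testBit_eq_div, testBit_eq_div]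
  have hk : 2 ^ k = 2 ^ j * 2 ^ (k - j) := by rw [← pow_add]; congr 1; omega
  have hdiv : (a + 2 ^ k) / 2 ^ j = a / 2 ^ j + 2 ^ (k - j) := by
    rw [hk, Nat.add_mul_div_left _ _ (by positivity)]
  rw [hdiv]
  have he : 2 ^ (k - j) % 2 = 0 := by
    rcases Nat.exists_eq_succ_of_ne_zero (show k - j ≠ 0 by omega) with ⟨i, hi⟩
    rw [hi, pow_succ, Nat.mul_mod_left]
  simp only [decide_eq_decide]
  generalize a / 2 ^ j = x
  omega

private lemma mem_A0_iff (n : ℕ) : n ∈ A0 ↔ Even (c1 n) := Iff.rfl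

theorem stmt_14 (y z L : ℕ)
    (h : (y.testBit (L + 1), y.testBit (L + 2),
          z.testBit L, z.testBit (L + 1), z.testBit (L + 2))
          = (true, false, false, true, false) ∨
        (y.testBit (L + 1), y.testBit (L + 2),
          z.testBit L, z.testBit (L + 1), z.testBit (L + 2))
          = (false, false, false, false, true)) :
    ((y ∈ A0 ↔ z ∈ A0) ↔
      ¬ ((if y.testBit (L + 1) then y - 2 ^ (L + 1) else y + 2 ^ (L + 1)) ∈ A0 ↔
         (if y.testBit (L + 1) then z + 2 ^ (L + 1) else z - 2 ^ (L + 1)) ∈ A0)) := by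
  have p2 : (2:ℕ) ^ (L + 2) = 2 ^ (L + 1) * 2 := by rw [pow_succ]
  simp only [Prod.mk.injEq] at h
  rcases h with ⟨hy1, hy2, hz0, hz1, hz2⟩ | ⟨hy1, hy2, hz0, hz1, hz2⟩
  · -- pattern (1,0,0,1,0) : y' = y - 2^(L+1), z' = z + 2^(L+1)
    obtain ⟨a, hya, haf⟩ := exists_dec hy1
    obtain ⟨b, hzb, hbf⟩ := exists_dec hz1
    have hcy : c1 y = c1 a + 1 := by rw [hya]; exact c1_addpow _ _ haf
    have hsub : y - 2 ^ (L + 1) = a := by omega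
    have hb2 : b.testBit (L + 2) = false := by
      have := bit_above hbf
      rw [← hzb] at this
      rw [← this, hz2]
    have hz' : z + 2 ^ (L + 1) = b + 2 ^ (L + 2) := by omega
    have hcz' : c1 (z + 2 ^ (L + 1)) = c1 b + 1 := by
      rw [hz']; exact c1_addpow _ _ hb2
    have hcz : c1 z = c1 b + 1 := by rw [hzb]; exact c1_addpow _ _ hbf
    simp only [hy1, if_true, hsub, mem_A0_iff, hcy, hcz, hcz', Nat.even_add_one]
    tauto
  · -- pattern (0,0,0,0,1) : y' = y + 2^(L+1), z' = z - 2^(L+1)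
    obtain ⟨b, hzb, hbf⟩ := exists_dec hz2
    have hcy' : c1 (y + 2 ^ (L + 1)) = c1 y + 1 := c1_addpow _ _ hy1
    have hb1 : b.testBit (L + 1) = false := by
      have := bit_below (a := b) (show L + 1 < L + 2 by omega)
      rw [← hzb] at this
      rw [← this, hz1]
    have hz' : z - 2 ^ (L + 1) = b + 2 ^ (L + 1) := by omega
    have hcz' : c1 (z - 2 ^ (L + 1)) = c1 b + 1 := by
      rw [hz']; exact c1_addpow _ _ hb1
    have hcz : c1 z = c1 b + 1 := by rw [hzb]; exact c1_addpow _ _ hbf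
    simp only [hy1, if_false, Bool.false_eq_true, mem_A0_iff, hcy', hcz, hcz', Nat.even_add_one]
    tauto
end

section
/- Let A be a subset of ℕ and N a positive integer such that R_2(A,n) = R_2(ℕ\A,n) for all n ≥ 2N−1. Then for every m ≥ N and every i ≥ 0, A ∩ [2^i m, 2^i(m+1)) = 2^i m + (A_0 ∩ [0,2^i)) if m ∈ A, and A ∩ [2^i m, 2^i(m+1)) = 2^i m + (B_0 ∩ [0,2^i)) if m ∉ A. -/
open Finset

lemma A0_zero : (0:ℕ) ∈ A0 := by simp [A0]

lemma A0_two_mul (n : ℕ) : 2*n ∈ A0 ↔ n ∈ A0 := by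
  rcases Nat.eq_zero_or_pos n with rfl | hn
  · simp
  · have h : Nat.digits 2 (2*n) = 0 :: Nat.digits 2 n := by
      rw [Nat.digits_def' (b := 2) (by norm_num) (by omega), Nat.mul_mod_right,
        Nat.mul_div_cancel_left _ (by norm_num)]
    simp only [A0, Set.mem_setOf_eq, h, List.count_cons]
    simp

lemma A0_two_mul_add_one (n : ℕ) : 2*n+1 ∈ A0 ↔ n ∉ A0 := by
  have h : Nat.digits 2 (2*n+1) = 1 :: Nat.digits 2 n := by
    rw [Nat.digits_def' (b := 2) (by norm_num) (by omega)]
    congr 1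
    · omega
    · congr 1; omega
  simp only [A0, Set.mem_setOf_eq, h, List.count_cons]
  simp [Nat.even_add_one]

open Classical in
lemma r2_eq (A : Set ℕ) (n : ℕ) :
    R2 A n = #((Finset.range ((n+1)/2)).filter (fun a => a ∈ A ∧ n - a ∈ A)) := by
  classical
  have hS : {p : ℕ × ℕ | p.1 < p.2 ∧ p.1 + p.2 = n ∧ p.1 ∈ A ∧ p.2 ∈ A}
      = (fun a => (a, n - a)) '' ↑((Finset.range ((n+1)/2)).filter (fun a => a ∈ A ∧ n - a ∈ A)) := by
    ext ⟨a, b⟩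
    simp only [Set.mem_setOf_eq, Set.mem_image, Finset.coe_filter, Finset.mem_range,
      Set.mem_setOf_eq, Prod.mk.injEq]
    constructor
    · rintro ⟨h1, h2, h3, h4⟩
      exact ⟨a, ⟨by omega, h3, by rw [show n - a = b by omega]; exact h4⟩, rfl, by omega⟩
    · rintro ⟨x, ⟨hx, hxA, hxB⟩, rfl, rfl⟩
      exact ⟨by omega, by omega, hxA, hxB⟩
  rw [R2, hS, Set.ncard_image_of_injOn (fun x _ y _ hxy => (Prod.mk.injEq _ _ _ _ ▸ hxy).1),
    Set.ncard_coe_finset]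

open Classical in
lemma key_count (A : Set ℕ) (n : ℕ) :
    R2 A n + (n+1)/2 =
      R2 Aᶜ n + #((range ((n+1)/2)).filter (· ∈ A))
        + #((Finset.Ico (n/2+1) (n+1)).filter (· ∈ A)) := by
  classical
  have hb : #((Finset.Ico (n/2+1) (n+1)).filter (· ∈ A))
      = ∑ a ∈ range ((n+1)/2), (if n - a ∈ A then 1 else 0) := by
    rw [card_filter]
    refine (Finset.sum_nbij' (fun a => n - a) (fun b => n - b)
      (fun a ha => ?_) (fun b hb => ?_) (fun a ha => ?_) (fun b hb => ?_)
      (fun a ha => ?_)).symm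
    · simp only [mem_range] at ha; simp only [mem_Ico]; omega
    · simp only [mem_Ico] at hb; simp only [mem_range]; omega
    · simp only [mem_range] at ha; show n - (n - a) = a; omega
    · simp only [mem_Ico] at hb; show n - (n - b) = b; omega
    · rfl
  rw [r2_eq, r2_eq, card_filter, card_filter, card_filter, hb]
  have hpt : ∀ a ∈ range ((n+1)/2),
      ((if a ∈ A ∧ n - a ∈ A then 1 else 0) + 1 : ℕ)
        = (if a ∈ Aᶜ ∧ n - a ∈ Aᶜ then 1 else 0) + ((if a ∈ A then 1 else 0)
          + (if n - a ∈ A then 1 else 0)) := by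
    intro a _
    by_cases h1 : a ∈ A <;> by_cases h2 : n - a ∈ A <;> simp [h1, h2]
  calc ∑ a ∈ range ((n+1)/2), (if a ∈ A ∧ n - a ∈ A then 1 else 0) + (n+1)/2
      = ∑ a ∈ range ((n+1)/2), ((if a ∈ A ∧ n - a ∈ A then 1 else 0) + 1) := by
        rw [Finset.sum_add_distrib]; simp
    _ = ∑ a ∈ range ((n+1)/2), ((if a ∈ Aᶜ ∧ n - a ∈ Aᶜ then 1 else 0)
          + ((if a ∈ A then 1 else 0) + (if n - a ∈ A then 1 else 0))) :=
        Finset.sum_congr rfl hpt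
    _ = _ := by rw [Finset.sum_add_distrib, Finset.sum_add_distrib]; ring

open Classical in
lemma key_rec (A : Set ℕ) (N : ℕ) (hN : 0 < N)
    (h : ∀ n, 2*N - 1 ≤ n → R2 A n = R2 Aᶜ n) :
    ∀ m, N ≤ m → (2*m ∈ A ↔ m ∈ A) ∧ (2*m+1 ∈ A ↔ m ∉ A) := by
  classical
  have hE : ∀ n, 2*N-1 ≤ n →
      #((range ((n+1)/2)).filter (· ∈ A))
        + #((Finset.Ico (n/2+1) (n+1)).filter (· ∈ A)) = (n+1)/2 := by
    intro n hn
    have h1 := key_count A n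
    have h2 := h n hn
    omega
  intro m hm
  have e1 := hE (2*m-1) (by omega)
  have e2 := hE (2*m) (by omega)
  have e3 := hE (2*m+1) (by omega)
  rw [show (2*m-1+1)/2 = m by omega, show (2*m-1)/2+1 = m by omega,
    show 2*m-1+1 = 2*m by omega] at e1
  rw [show 2*m/2 = m by omega, show (2*m+1)/2 = m by omega] at e2
  rw [show (2*m+1+1)/2 = m+1 by omega, show (2*m+1)/2+1 = m+1 by omega,
    show 2*m+1+1 = 2*m+2 by omega] at e3
  simp only [card_filter] at e1 e2 e3
  have d1 : ∑ x ∈ Ico m (2*m), (if x ∈ A then 1 else 0)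
      = (if m ∈ A then 1 else 0) + ∑ x ∈ Ico (m+1) (2*m), (if x ∈ A then 1 else 0) :=
    Finset.sum_eq_sum_Ico_succ_bot (by omega) _
  have d2 : ∑ x ∈ Ico (m+1) (2*m+1), (if x ∈ A then 1 else 0)
      = ∑ x ∈ Ico (m+1) (2*m), (if x ∈ A then 1 else 0) + (if 2*m ∈ A then 1 else 0) :=
    Finset.sum_Ico_succ_top (by omega) _
  have d3 : ∑ x ∈ Ico (m+1) (2*m+2), (if x ∈ A then 1 else 0)
      = ∑ x ∈ Ico (m+1) (2*m+1), (if x ∈ A then 1 else 0) + (if 2*m+1 ∈ A then 1 else 0) :=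
    Finset.sum_Ico_succ_top (by omega) _
  have d4 : ∑ x ∈ range (m+1), (if x ∈ A then 1 else 0)
      = ∑ x ∈ range m, (if x ∈ A then 1 else 0) + (if m ∈ A then 1 else 0) :=
    Finset.sum_range_succ _ _
  rw [d1] at e1
  rw [d2] at e2
  rw [d4, d3, d2] at e3
  set s1 := ∑ x ∈ range m, (if x ∈ A then 1 else 0) with hs1
  set s2 := ∑ x ∈ Ico (m+1) (2*m), (if x ∈ A then 1 else 0) with hs2
  clear_value s1 s2
  clear d1 d2 d3 d4
  by_cases ha : m ∈ A <;> by_cases hb : 2*m ∈ A <;> by_cases hc : 2*m+1 ∈ A <;>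
    simp only [ha, hb, hc, if_true, if_false] at e1 e2 e3 <;>
    first
      | omega
      | (constructor <;> tauto)

lemma pointwise (A : Set ℕ) (N : ℕ)
    (key : ∀ m, N ≤ m → (2*m ∈ A ↔ m ∈ A) ∧ (2*m+1 ∈ A ↔ m ∉ A)) :
    ∀ i : ℕ, ∀ m, N ≤ m → ∀ k, k < 2^i →
      (2^i * m + k ∈ A ↔ (m ∈ A ↔ k ∈ A0)) := by
  intro i
  induction i with
  | zero =>
    intro m hm k hk
    interval_cases k
    simp [A0_zero]
  | succ i ih =>
    intro m hm k hk
    have hp : (2:ℕ)^(i+1) * m = 2*(2^i * m) := by ring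
    have hj : k/2 < 2^i := by
      have : (2:ℕ)^(i+1) = 2*2^i := by ring
      omega
    have ht : N ≤ 2^i * m + k/2 := by
      have h1 : m ≤ 2^i*m := Nat.le_mul_of_pos_left m (Nat.two_pow_pos i)
      omega
    have hIH := ih m hm (k/2) hj
    have hsplit : k = 2*(k/2) ∨ k = 2*(k/2)+1 := by omega
    rcases hsplit with hk2 | hk2
    · have hA0 : k ∈ A0 ↔ k/2 ∈ A0 := by rw [← A0_two_mul (k/2), ← hk2]
      rw [show 2^(i+1) * m + k = 2*(2^i * m + k/2) by omega]
      rw [(key _ ht).1, hIH, hA0]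
    · have hA0 : k ∈ A0 ↔ k/2 ∉ A0 := by rw [← A0_two_mul_add_one (k/2), ← hk2]
      rw [show 2^(i+1) * m + k = 2*(2^i * m + k/2)+1 by omega]
      rw [(key _ ht).2, hIH, hA0]
      tauto

theorem stmt_16 (A : Set ℕ) (N : ℕ) (hN : 0 < N)
    (h : ∀ n, 2 * N - 1 ≤ n → R2 A n = R2 Aᶜ n) :
    ∀ m, N ≤ m → ∀ i : ℕ,
      (m ∈ A →
        A ∩ Set.Ico (2 ^ i * m) (2 ^ i * (m + 1))
          = (fun k => 2 ^ i * m + k) '' (A0 ∩ Set.Iio (2 ^ i))) ∧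
      (m ∉ A →
        A ∩ Set.Ico (2 ^ i * m) (2 ^ i * (m + 1))
          = (fun k => 2 ^ i * m + k) '' (A0ᶜ ∩ Set.Iio (2 ^ i))) := by
  have key := key_rec A N hN (fun n hn => h n (by omega))
  have pt := pointwise A N key
  intro m hm i
  have hmul : 2 ^ i * (m + 1) = 2 ^ i * m + 2 ^ i := by ring
  constructor
  · intro hmA
    ext x
    constructor
    · rintro ⟨hxA, hx1, hx2⟩
      refine ⟨x - 2 ^ i * m, ⟨?_, ?_⟩, by simp; omega⟩
      · have hlt : x - 2 ^ i * m < 2 ^ i := by omega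
        have := pt i m hm (x - 2 ^ i * m) hlt
        rw [show 2 ^ i * m + (x - 2 ^ i * m) = x by omega] at this
        rw [this] at hxA
        exact hxA.mp hmA
      · simp only [Set.mem_Iio]; omega
    · rintro ⟨k, ⟨hkA0, hklt⟩, rfl⟩
      simp only [Set.mem_Iio] at hklt
      refine ⟨?_, ?_, ?_⟩
      · exact (pt i m hm k hklt).mpr (iff_of_true hmA hkA0)
      · show 2 ^ i * m ≤ 2 ^ i * m + k; omega
      · show 2 ^ i * m + k < 2 ^ i * (m + 1); omega
  · intro hmA
    ext x
    constructor
    · rintro ⟨hxA, hx1, hx2⟩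
      refine ⟨x - 2 ^ i * m, ⟨?_, ?_⟩, by simp; omega⟩
      · have hlt : x - 2 ^ i * m < 2 ^ i := by omega
        have := pt i m hm (x - 2 ^ i * m) hlt
        rw [show 2 ^ i * m + (x - 2 ^ i * m) = x by omega] at this
        intro hk
        exact hmA ((this.mp hxA).mpr hk)
      · simp only [Set.mem_Iio]; omega
    · rintro ⟨k, ⟨hkA0, hklt⟩, rfl⟩
      simp only [Set.mem_Iio] at hklt
      refine ⟨?_, ?_, ?_⟩
      · refine (pt i m hm k hklt).mpr (iff_of_false hmA hkA0)
      · show 2 ^ i * m ≤ 2 ^ i * m + k; omega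
      · show 2 ^ i * m + k < 2 ^ i * (m + 1); omega
end

section
/- Let N be a positive integer and A ⊆ ℕ with |A ∩ [0, 2N−1]| = N, and suppose for all m ≥ N: 2m ∈ A ⟺ m ∉ A and 2m+1 ∈ A ⟺ m ∈ A. Then R_3(A,n) = R_3(ℕ\A, n) for all n ≥ 2N−1. -/
/-!
Write `c` for the indicator of `A`. Pairing `a` with `n - a` for `a ≤ n / 2`, the pointwise
identity `[a, n - a ∈ A] + 1 = [a, n - a ∉ A] + c a + c (n - a)` shows that
`R3 A n = R3 Aᶜ n` exactly when `∑_{a ≤ n/2} (c a + c (n - a)) = n / 2 + 1`.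
For `m ≥ N` the recursion gives `c (2m) + c (2m + 1) = 1`, so by the initial count `A` has
exactly `m + 1` elements below `2m + 2` whenever `m + 1 ≥ N`. For `n = 2m + 1` the sum is this
count; for `n = 2m` it counts `c m` twice and misses `c (2m + 1)`, which is equal to `c m`.
-/
open Finset

lemma R3_eq_card_filter (B : Set ℕ) [DecidablePred (· ∈ B)] (n : ℕ) :
    R3 B n = #{a ∈ range (n / 2 + 1) | a ∈ B ∧ n - a ∈ B} := by
  have hinj : Function.Injective fun a => (a, n - a) :=
    Function.LeftInverse.injective (g := Prod.fst) fun _ => rfl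
  rw [← Set.ncard_coe_finset, ← Set.ncard_image_of_injective _ hinj, R3]
  congr 1
  ext ⟨a, b⟩
  simp only [Set.mem_ofPred_eq, Set.mem_image, coe_filter, mem_range, Prod.mk.injEq]
  constructor
  · rintro ⟨hle, rfl, ha, hb⟩
    exact ⟨a, ⟨by omega, ha, by rwa [Nat.add_sub_cancel_left]⟩, rfl, by omega⟩
  · rintro ⟨a, ⟨ha, haB, hbB⟩, rfl, rfl⟩
    exact ⟨by omega, by omega, haB, hbB⟩

lemma R3_add_eq_R3_compl_add (B : Set ℕ) (n : ℕ) :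
    R3 B n + (n / 2 + 1) =
      R3 Bᶜ n + ∑ a ∈ range (n / 2 + 1), (B.indicator 1 a + B.indicator 1 (n - a)) := by
  classical
  have key : ∀ a, (if a ∈ B ∧ n - a ∈ B then 1 else 0) + 1 =
      (if a ∈ Bᶜ ∧ n - a ∈ Bᶜ then 1 else 0) + (B.indicator 1 a + B.indicator 1 (n - a)) := by
    intro a
    by_cases ha : a ∈ B <;> by_cases hb : n - a ∈ B <;> simp [ha, hb]
  have := sum_congr rfl fun a (_ : a ∈ range (n / 2 + 1)) => key a
  rwa [sum_add_distrib, sum_add_distrib, ← card_filter, ← card_filter, ← R3_eq_card_filter,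
    ← R3_eq_card_filter, sum_const, card_range, smul_eq_mul, mul_one] at this

lemma R3_eq_R3_compl_iff (B : Set ℕ) (n : ℕ) :
    R3 B n = R3 Bᶜ n ↔
      ∑ a ∈ range (n / 2 + 1), (B.indicator 1 a + B.indicator 1 (n - a)) = n / 2 + 1 := by
  have := R3_add_eq_R3_compl_add B n
  omega

section Reflect

variable {M : Type*} [AddCommMonoid M] (f : ℕ → M) (m : ℕ)

lemma sum_range_add_reflect_odd :
    ∑ a ∈ range (m + 1), (f a + f (2 * m + 1 - a)) = ∑ a ∈ range (2 * m + 2), f a := by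
  have := sum_Ico_reflect f 0 (n := 2 * m + 1) (m := m + 1) (by omega)
  rw [Nat.Ico_zero_eq_range, Nat.sub_zero, show 2 * m + 1 + 1 - (m + 1) = m + 1 by omega] at this
  rw [sum_add_distrib, this, sum_range_add_sum_Ico _ (by omega)]

lemma sum_range_add_reflect_even :
    ∑ a ∈ range (m + 1), (f a + f (2 * m - a)) = ∑ a ∈ range (2 * m + 1), f a + f m := by
  have := sum_Ico_reflect f 0 (n := 2 * m) (m := m + 1) (by omega)
  rw [Nat.Ico_zero_eq_range, show 2 * m + 1 - (m + 1) = m by omega] at this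
  rw [sum_add_distrib, this, sum_range_succ,
    ← sum_range_add_sum_Ico _ (show m ≤ 2 * m + 1 by omega)]
  abel

end Reflect

lemma ncard_inter_Iio_eq_sum_indicator (B : Set ℕ) (k : ℕ) :
    (B ∩ Set.Iio k).ncard = ∑ a ∈ range k, B.indicator 1 a := by
  classical
  have : B ∩ Set.Iio k = ↑{a ∈ range k | a ∈ B} := by
    ext a; simp [and_comm]
  rw [this, Set.ncard_coe_finset, card_filter]
  simp [Set.indicator_apply]

lemma sum_range_two_mul_of_pair_sum_eq_one {f : ℕ → ℕ} {N : ℕ}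
    (hbase : ∑ a ∈ range (2 * N), f a = N) (hpair : ∀ m, N ≤ m → f (2 * m) + f (2 * m + 1) = 1)
    {m : ℕ} (hm : N ≤ m) : ∑ a ∈ range (2 * m), f a = m := by
  induction m, hm using Nat.le_induction with
  | base => exact hbase
  | succ m hm ih =>
    rw [show 2 * (m + 1) = 2 * m + 1 + 1 by ring, sum_range_succ, sum_range_succ, ih, add_assoc,
      hpair m hm]

theorem stmt_18 (N : ℕ) (hN : 0 < N) (A : Set ℕ)
    (hcard : (A ∩ Set.Icc 0 (2 * N - 1)).ncard = N)
    (hrec : ∀ m, N ≤ m → ((2 * m ∈ A ↔ m ∉ A) ∧ (2 * m + 1 ∈ A ↔ m ∈ A))) :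
    ∀ n, 2 * N - 1 ≤ n → R3 A n = R3 Aᶜ n := by
  intro n hn
  rw [R3_eq_R3_compl_iff]
  set c : ℕ → ℕ := A.indicator 1
  have hpair : ∀ m, N ≤ m → c (2 * m) + c (2 * m + 1) = 1 := by
    intro m hm
    by_cases h : m ∈ A <;> simp [c, (hrec m hm).1, (hrec m hm).2, h]
  have hodd : ∀ m, N ≤ m → c (2 * m + 1) = c m := by
    intro m hm
    by_cases h : m ∈ A <;> simp [c, (hrec m hm).2, h]
  have hbase : ∑ a ∈ range (2 * N), c a = N := by
    rw [← ncard_inter_Iio_eq_sum_indicator, ← hcard]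
    congr 2
    ext a; simp only [Set.mem_Iio, Set.mem_Icc]; omega
  have hsum (m : ℕ) (hm : N ≤ m + 1) : ∑ a ∈ range (2 * m + 2), c a = m + 1 :=
    sum_range_two_mul_of_pair_sum_eq_one hbase hpair hm
  obtain ⟨m, rfl | rfl⟩ := Nat.even_or_odd' n
  · rw [show 2 * m / 2 = m by omega, sum_range_add_reflect_even, ← hodd m (by omega),
      ← sum_range_succ, hsum m (by omega)]
  · rw [show (2 * m + 1) / 2 = m by omega, sum_range_add_reflect_odd, hsum m (by omega)]
end
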